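/- arXiv:2501.13736 — 2 statements merged into one kernel-verified Lean document; each statement's English description precedes it below -/
import Mathlib

section
/- For a probability mass function p on ℕ with p(i) sorted in descending order, the discrete layered entropy Λ(p) = Σ_{i≥1} p(i)(i log i − (i−1) log(i−1)) equals the integral ∫_0^∞ p(⌈t⌉) log(e t) dt. -/
open MeasureTheory

/-- `lamt i = (i+1) log₂ (i+1) - i log₂ i`, the coefficient of the (i+1)-st
largest probability in the discrete layered entropy (1-indexed: term for index i+1). -/
noncomputable def lamt (i : ℕ) : ℝ :=
  ((i : ℝ) + 1) * Real.logb 2 ((i : ℝ) + 1) - (i : ℝ) * Real.logb 2 (i : ℝ)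

/-- A probability mass function: nonnegative and summing to 1. -/
def IsPMF {X : Type*} (p : X → ℝ) : Prop := (∀ x, 0 ≤ p x) ∧ HasSum p 1

open Real Set Filter
open scoped NNReal ENNReal

lemma lamt_nonneg (i : ℕ) : 0 ≤ lamt i := by
  unfold lamt
  rcases Nat.eq_zero_or_pos i with h | h
  · simp [h]
  · have h1 : (1:ℝ) ≤ (i:ℝ) := by exact_mod_cast h
    have hlb : 0 ≤ Real.logb 2 (i:ℝ) := Real.logb_nonneg one_lt_two h1
    have hle : Real.logb 2 (i:ℝ) ≤ Real.logb 2 ((i:ℝ)+1) :=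
      (Real.logb_le_logb one_lt_two (by linarith) (by linarith)).mpr (by linarith)
    nlinarith

/-- On `(i, i+1]`, `⌈t⌉₊ = i + 1`. -/
lemma ceil_eq_on (i : ℕ) {t : ℝ} (ht : t ∈ Set.Ioc (i:ℝ) ((i:ℝ)+1)) : ⌈t⌉₊ = i + 1 := by
  rw [Nat.ceil_eq_iff (Nat.succ_ne_zero i)]
  constructor
  · simpa using ht.1
  · push_cast
    exact ht.2

/-- The integrand function for the logarithm part. -/
noncomputable def L (t : ℝ) : ℝ := Real.logb 2 (Real.exp 1 * t)

lemma L_eq {t : ℝ} (ht : 0 < t) : L t = (1 + Real.log t) / Real.log 2 := by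
  unfold L
  rw [Real.logb, Real.log_mul (Real.exp_ne_zero 1) (ne_of_gt ht), Real.log_exp]

lemma L_measurable : Measurable L := by
  unfold L
  exact (Real.measurable_log.comp (measurable_const.mul measurable_id)).div_const _

/-- For `1 ≤ a ≤ b`, the interval integral of `L`. -/
lemma integral_L (a b : ℝ) (ha : 0 < a) (hab : a ≤ b) :
    ∫ t in Set.Ioc a b, L t = (b * Real.log b - a * Real.log a) / Real.log 2 := by
  rw [← intervalIntegral.integral_of_le hab]
  have h0 : (0:ℝ) ∉ Set.uIcc a b := by
    rw [Set.uIcc_of_le hab]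
    intro h
    exact absurd h.1 (not_le.mpr ha)
  have hcongr : Set.EqOn L (fun t => (1 + Real.log t) / Real.log 2) (Set.uIcc a b) := by
    intro t ht
    rw [Set.uIcc_of_le hab] at ht
    exact L_eq (lt_of_lt_of_le ha ht.1)
  rw [intervalIntegral.integral_congr hcongr]
  have : ∫ t in a..b, (1 + Real.log t) / Real.log 2
      = (∫ t in a..b, (1 + Real.log t)) / Real.log 2 :=
    intervalIntegral.integral_div _ _
  rw [this]
  have hint : ∫ t in a..b, (1 + Real.log t)
      = (b - a) + (b * Real.log b - a * Real.log a - b + a) := by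
    rw [intervalIntegral.integral_add intervalIntegrable_const
      (intervalIntegral.intervalIntegrable_log h0)]
    rw [intervalIntegral.integral_const, integral_log]
    simp [smul_eq_mul]
  rw [hint]
  ring_nf

lemma integral_L_piece (i : ℕ) (hi : 1 ≤ i) :
    ∫ t in Set.Ioc (i:ℝ) ((i:ℝ)+1), L t = lamt i := by
  have ha : (0:ℝ) < i := by exact_mod_cast hi
  rw [integral_L i (i+1) ha (by linarith)]
  unfold lamt
  rw [Real.logb, Real.logb]
  ring

lemma L_integrableOn_Ioc01 : IntegrableOn L (Set.Ioc (0:ℝ) 1) := by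
  have hmeas : AEStronglyMeasurable L (volume.restrict (Set.Ioc (0:ℝ) 1)) :=
    L_measurable.aestronglyMeasurable
  -- dominate by (1 + 2 * t ^ (-(1/2) : ℝ)) / log 2 ... use |L t| ≤ (1 + 2 * t^(-1/2))/log 2
  have hdom : IntegrableOn (fun t : ℝ => (1 + 2 * t ^ (-(1/2) : ℝ)) / Real.log 2)
      (Set.Ioc (0:ℝ) 1) := by
    have h1 : IntegrableOn (fun t : ℝ => t ^ (-(1/2) : ℝ)) (Set.Ioo (0:ℝ) 1) :=
      (intervalIntegral.integrableOn_Ioo_rpow_iff one_pos).mpr (by norm_num)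
    have h1' : IntegrableOn (fun t : ℝ => t ^ (-(1/2) : ℝ)) (Set.Ioc (0:ℝ) 1) := by
      rwa [IntegrableOn, Measure.restrict_congr_set MeasureTheory.Ioo_ae_eq_Ioc] at h1
    have : IntegrableOn (fun t : ℝ => 1 + 2 * t ^ (-(1/2) : ℝ)) (Set.Ioc (0:ℝ) 1) :=
      (integrableOn_const measure_Ioc_lt_top.ne).add (h1'.const_mul 2)
    exact this.div_const _
  refine Integrable.mono hdom hmeas (Filter.eventually_of_mem
    (self_mem_ae_restrict measurableSet_Ioc) ?_)
  intro t ht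
  have ht0 : 0 < t := ht.1
  have ht1 : t ≤ 1 := ht.2
  rw [L_eq ht0]
  have hlog2 : 0 < Real.log 2 := Real.log_pos one_lt_two
  rw [Real.norm_eq_abs, Real.norm_eq_abs, abs_div, abs_of_pos hlog2, abs_div, abs_of_pos hlog2,
    div_le_div_iff_of_pos_right hlog2]
  have hlogt : Real.log t ≤ 0 := Real.log_nonpos ht0.le ht1
  have hbound : |Real.log t| ≤ 2 * t ^ (-(1/2) : ℝ) := by
    rw [abs_of_nonpos hlogt]
    have h2 : -Real.log t = 2 * Real.log ((t ^ ((1/2):ℝ))⁻¹) := by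
      rw [Real.log_inv, Real.log_rpow ht0]; ring
    rw [h2]
    have hpos : 0 < (t ^ ((1/2):ℝ))⁻¹ := by positivity
    have h4 : (t ^ ((1/2):ℝ))⁻¹ = t ^ (-(1/2) : ℝ) := by
      rw [← Real.rpow_neg ht0.le]
    have h3 : Real.log ((t ^ ((1/2):ℝ))⁻¹) ≤ t ^ (-(1/2) : ℝ) := by
      rw [← h4]
      exact (Real.log_le_sub_one_of_pos hpos).trans (by linarith)
    linarith
  have habs : |1 + Real.log t| ≤ 1 + |Real.log t| := by
    calc |1 + Real.log t| ≤ |1| + |Real.log t| := abs_add_le _ _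
    _ = 1 + |Real.log t| := by rw [abs_one]
  have hrpow_pos : (0:ℝ) ≤ 2 * t ^ (-(1/2) : ℝ) := by positivity
  have : |1 + 2 * t ^ (-(1/2) : ℝ)| = 1 + 2 * t ^ (-(1/2) : ℝ) := by
    rw [abs_of_nonneg]; linarith
  rw [this]
  linarith

lemma integral_L_Ioc01 : ∫ t in Set.Ioc (0:ℝ) 1, L t = 0 := by
  set s : ℕ → Set ℝ := fun n => Set.Ioc (1/((n:ℝ)+1)) 1 with hs
  have hsm : ∀ n, MeasurableSet (s n) := fun n => measurableSet_Ioc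
  have hmono : Monotone s := by
    intro m n hmn
    apply Set.Ioc_subset_Ioc_left
    apply one_div_le_one_div_of_le
    · positivity
    · push_cast; exact_mod_cast by exact_mod_cast add_le_add_left (by exact_mod_cast hmn : (m:ℝ) ≤ n) 1
  have hunion : (⋃ n, s n) = Set.Ioc (0:ℝ) 1 := by
    ext t
    simp only [Set.mem_iUnion, Set.mem_Ioc, hs]
    constructor
    · rintro ⟨n, h1, h2⟩
      exact ⟨lt_trans (by positivity) h1, h2⟩
    · rintro ⟨h1, h2⟩
      obtain ⟨n, hn⟩ := exists_nat_gt (1/t)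
      refine ⟨n, ?_, h2⟩
      rw [div_lt_iff₀ (by positivity)]
      rw [div_lt_iff₀ h1] at hn
      nlinarith
  have hint : IntegrableOn L (⋃ n, s n) := by
    rw [hunion]; exact L_integrableOn_Ioc01
  have htend := MeasureTheory.tendsto_setIntegral_of_monotone hsm hmono hint
  rw [hunion] at htend
  -- compute each integral
  have hval : ∀ n : ℕ, ∫ t in s n, L t
      = (1 * Real.log 1 - (1/((n:ℝ)+1)) * Real.log (1/((n:ℝ)+1))) / Real.log 2 := by
    intro n
    exact integral_L _ 1 (by positivity) (by rw [div_le_one (by positivity)]; linarith [Nat.cast_nonneg (α := ℝ) n])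
  have htend2 : Filter.Tendsto (fun n : ℕ => ∫ t in s n, L t) Filter.atTop (nhds 0) := by
    simp only [hval, Real.log_one, mul_one, one_mul, zero_sub]
    have ha : Filter.Tendsto (fun n : ℕ => 1/((n:ℝ)+1)) Filter.atTop (nhds 0) :=
      tendsto_one_div_add_atTop_nhds_zero_nat
    have hc : Filter.Tendsto (fun x : ℝ => -(x * Real.log x) / Real.log 2) (nhds 0) (nhds 0) := by
      have := (continuous_mul_log.neg.div_const (Real.log 2)).tendsto 0
      simpa using this
    exact hc.comp ha
  exact tendsto_nhds_unique htend htend2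

lemma L_integrableOn_piece (i : ℕ) : IntegrableOn L (Set.Ioc (i:ℝ) ((i:ℝ)+1)) := by
  rcases Nat.eq_zero_or_pos i with rfl | hi
  · simpa using L_integrableOn_Ioc01
  · have ha : (0:ℝ) < i := by exact_mod_cast hi
    have hcont : ContinuousOn L (Set.Icc (i:ℝ) ((i:ℝ)+1)) := by
      intro t ht
      have ht0 : (0:ℝ) < t := lt_of_lt_of_le ha ht.1
      have : ContinuousAt L t := by
        unfold L
        exact (Real.continuousAt_logb (by positivity)).comp
          ((continuous_const.mul continuous_id).continuousAt)
      exact this.continuousWithinAt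
    exact (hcont.integrableOn_compact isCompact_Icc).mono_set Set.Ioc_subset_Icc_self

lemma L_nonneg {t : ℝ} (ht : 1 ≤ t) : 0 ≤ L t := by
  unfold L
  apply Real.logb_nonneg one_lt_two
  have het : 1 ≤ Real.exp 1 := by linarith [Real.exp_one_gt_d9]
  nlinarith

/-- for a nonincreasing pmf `p` on ℕ (where `p i` is the (i+1)-st entry,
i.e. `p` is already sorted descending), the discrete layered entropy
`Λ(p) = ∑_{i≥1} p↓(i) (i log₂ i − (i−1) log₂ (i−1))` equals `∫_0^∞ p(⌈t⌉) log₂(e t) dt`. -/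
theorem stmt0 (p : ℕ → ℝ) (hpmf : IsPMF p) (hmono : Antitone p) :
    ∑' i : ℕ, p i * lamt i
      = ∫ t in Set.Ioi (0 : ℝ), p (⌈t⌉₊ - 1) * Real.logb 2 (Real.exp 1 * t) := by
  obtain ⟨hp0, _⟩ := hpmf
  set f : ℝ → ℝ := fun t => p (⌈t⌉₊ - 1) * L t with hf
  have hgoal : (∫ t in Set.Ioi (0 : ℝ), p (⌈t⌉₊ - 1) * Real.logb 2 (Real.exp 1 * t))
      = ∫ t in Set.Ioi (0 : ℝ), f t := rfl
  rw [hgoal]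
  set s : ℕ → Set ℝ := fun i => Set.Ioc (i:ℝ) ((i:ℝ)+1) with hsdef
  have hsm : ∀ i, MeasurableSet (s i) := fun i => measurableSet_Ioc
  have hceil : ∀ i : ℕ, ∀ t ∈ s i, ⌈t⌉₊ - 1 = i := by
    intro i t ht
    rw [ceil_eq_on i ht]
    omega
  have hsd : Pairwise (Function.onFun Disjoint s) := by
    intro i j hij
    rw [Function.onFun, Set.disjoint_left]
    intro t h1 h2
    exact hij (by rw [← hceil i t h1, hceil j t h2])
  have hunion : (⋃ i, s i) = Set.Ioi (0:ℝ) := by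
    ext t
    simp only [Set.mem_iUnion, Set.mem_Ioi]
    constructor
    · rintro ⟨i, hi⟩
      exact lt_of_le_of_lt (by positivity) hi.1
    · intro ht
      refine ⟨⌈t⌉₊ - 1, ?_, ?_⟩
      · have h1 : 1 ≤ ⌈t⌉₊ := Nat.one_le_ceil_iff.mpr ht
        have h2 : (⌈t⌉₊ : ℝ) < t + 1 := Nat.ceil_lt_add_one ht.le
        have h3 : ((⌈t⌉₊ - 1 : ℕ) : ℝ) = (⌈t⌉₊ : ℝ) - 1 := by
          push_cast [h1]; ring
        rw [h3]; linarith
      · have h1 : 1 ≤ ⌈t⌉₊ := Nat.one_le_ceil_iff.mpr ht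
        have h3 : ((⌈t⌉₊ - 1 : ℕ) : ℝ) = (⌈t⌉₊ : ℝ) - 1 := by
          push_cast [h1]; ring
        rw [h3]
        have := Nat.le_ceil t
        linarith
  have hfeq : ∀ i : ℕ, Set.EqOn f (fun t => p i * L t) (s i) := by
    intro i t ht
    simp only [hf]
    rw [hceil i t ht]
  have hfmeas : Measurable f :=
    (measurable_from_nat.comp (Nat.measurable_ceil.sub measurable_const)).mul L_measurable
  have hpieceint : ∀ i : ℕ, IntegrableOn f (s i) := by
    intro i
    exact MeasureTheory.IntegrableOn.congr_fun ((L_integrableOn_piece i).const_mul (p i))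
      (fun t ht => (hfeq i ht).symm) (hsm i)
  have hpieceval : ∀ i : ℕ, ∫ t in s i, f t = p i * lamt i := by
    intro i
    rw [setIntegral_congr_fun (hsm i) (hfeq i), MeasureTheory.integral_const_mul]
    congr 1
    rcases Nat.eq_zero_or_pos i with rfl | hi
    · have h0 : s 0 = Set.Ioc (0:ℝ) 1 := by simp [hsdef]
      rw [h0, integral_L_Ioc01]
      simp [lamt]
    · exact integral_L_piece i hi
  -- the absolute-value piece integrals
  set h : ℕ → ℝ := fun i => p i * (∫ t in s i, |L t|) with hh
  have habs_eq : ∀ i : ℕ, Set.EqOn (fun t => |f t|) (fun t => p i * |L t|) (s i) := by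
    intro i t ht
    simp only
    rw [hfeq i ht, abs_mul, abs_of_nonneg (hp0 i)]
  have habsint : ∀ i : ℕ, ∫ t in s i, |f t| = h i := by
    intro i
    rw [setIntegral_congr_fun (hsm i) (habs_eq i), MeasureTheory.integral_const_mul]
  have hh_nonneg : ∀ i, 0 ≤ h i :=
    fun i => mul_nonneg (hp0 i) (integral_nonneg (fun t => abs_nonneg _))
  have hh_tail : ∀ i : ℕ, h (i + 1) = p (i + 1) * lamt (i + 1) := by
    intro i
    have : ∫ t in s (i+1), |L t| = ∫ t in s (i+1), L t := by
      apply setIntegral_congr_fun (hsm (i+1))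
      intro t ht
      simp only
      have h1t : (1:ℝ) ≤ t := by
        have := ht.1
        have : ((i+1:ℕ):ℝ) < t := this
        push_cast at this
        linarith [Nat.cast_nonneg (α := ℝ) i]
      rw [abs_of_nonneg (L_nonneg h1t)]
    rw [hh]
    simp only [this]
    rw [integral_L_piece (i+1) (Nat.le_add_left 1 i)]
  have hsummable_iff : Summable h ↔ Summable (fun i => p i * lamt i) := by
    rw [← summable_nat_add_iff 1, ← summable_nat_add_iff (f := fun i => p i * lamt i) 1]
    exact summable_congr (fun i => hh_tail i)
  -- lintegral identity
  have hlint : (∫⁻ t in Set.Ioi (0:ℝ), ‖f t‖₊) = ∑' i, ENNReal.ofReal (h i) := by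
    rw [← hunion, lintegral_iUnion hsm hsd]
    congr 1
    funext i
    have h1 : Integrable (fun t => |f t|) (volume.restrict (s i)) := (hpieceint i).abs
    have h2 : (0:ℝ→ℝ) ≤ᵐ[volume.restrict (s i)] fun t => |f t| :=
      Filter.Eventually.of_forall (fun t => abs_nonneg _)
    have h3 := MeasureTheory.ofReal_integral_eq_lintegral_ofReal h1 h2
    rw [habsint i] at h3
    rw [h3]
    apply lintegral_congr
    intro t
    rw [← Real.norm_eq_abs, ofReal_norm, enorm_eq_nnnorm]
  by_cases hsum : Summable (fun i => p i * lamt i)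
  · have hhsum : Summable h := hsummable_iff.mpr hsum
    have hfin : (∫⁻ t in Set.Ioi (0:ℝ), ‖f t‖₊) < ⊤ := by
      rw [hlint]
      have heq : ∀ i : ℕ, ENNReal.ofReal (h i) = (((h i).toNNReal : ℝ≥0) : ℝ≥0∞) := fun i => rfl
      rw [lt_top_iff_ne_top]
      simp only [heq]
      exact ENNReal.tsum_coe_ne_top_iff_summable.mpr hhsum.toNNReal
    have hintOn : IntegrableOn f (Set.Ioi (0:ℝ)) :=
      ⟨hfmeas.aestronglyMeasurable, hfin⟩
    rw [← hunion]
    rw [MeasureTheory.integral_iUnion hsm hsd (hunion ▸ hintOn)]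
    exact (tsum_congr hpieceval).symm
  · rw [tsum_eq_zero_of_not_summable hsum]
    have hnotint : ¬ IntegrableOn f (Set.Ioi (0:ℝ)) := by
      intro hI
      apply hsum
      rw [← hsummable_iff]
      have hfin : (∑' i, ENNReal.ofReal (h i)) ≠ ⊤ := by
        rw [← hlint]
        exact hI.2.ne
      have h5 : (∑' i, (((h i).toNNReal : ℝ≥0) : ℝ≥0∞)) ≠ ⊤ := hfin
      have hs2 := ENNReal.tsum_coe_ne_top_iff_summable.mp h5
      have hs3 : Summable (fun i => ((h i).toNNReal : ℝ)) := NNReal.summable_coe.mpr hs2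
      apply hs3.congr
      intro i
      simp [Real.coe_toNNReal _ (hh_nonneg i)]
    exact (MeasureTheory.integral_undef hnotint).symm
end

section
/- Bounded increase: for any discrete random variables X and Y with Y taking values in a finite set 𝒴, Λ(X,Y) ≤ Λ(X) + log₂|𝒴|. -/
open Finset Filter Real

def IsDescRearrange {X : Type*} (p : X → ℝ) (q : ℕ → ℝ) : Prop :=
  Antitone q ∧ ∀ t : ℝ, 0 < t → {x | t < p x}.ncard = {i | t < q i}.ncard

namespace Stmt9

noncomputable def g (n : ℕ) : ℝ := (n : ℝ) * Real.logb 2 (n : ℝ)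

lemma g_zero : g 0 = 0 := by simp [g]

lemma lamt_eq_g (i : ℕ) : lamt i = g (i + 1) - g i := by
  simp [lamt, g]

lemma lamt_zero : lamt 0 = 0 := by norm_num [lamt]

lemma sum_range_lamt (n : ℕ) : ∑ i ∈ Finset.range n, lamt i = g n := by
  have := Finset.sum_range_sub (f := g) n
  simp only [← lamt_eq_g] at this
  rw [this, g_zero, sub_zero]

lemma logb_le_lamt (i : ℕ) : Real.logb 2 ((i : ℝ) + 1) ≤ lamt i := by
  rcases Nat.eq_zero_or_pos i with h | h
  · subst h; norm_num [lamt]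
  · have h1 : (1 : ℝ) ≤ (i : ℝ) := by exact_mod_cast h
    have h2 : Real.logb 2 (i : ℝ) ≤ Real.logb 2 ((i : ℝ) + 1) :=
      Real.logb_le_logb_of_le (by norm_num) (by linarith) (by linarith)
    have h3 : (i : ℝ) * Real.logb 2 (i : ℝ) ≤ (i : ℝ) * Real.logb 2 ((i : ℝ) + 1) := by
      nlinarith
    simp only [lamt]; nlinarith

lemma lamt_nonneg (i : ℕ) : 0 ≤ lamt i :=
  le_trans (Real.logb_nonneg (by norm_num) (by have := Nat.cast_nonneg (α := ℝ) i; linarith)) (logb_le_lamt i)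

lemma key_log {x : ℝ} (hx : 0 ≤ x) :
    (x + 1) * Real.log (x + 1) - x * Real.log x ≤
      (x + 2) * Real.log (x + 2) - (x + 1) * Real.log (x + 1) := by
  rcases eq_or_lt_of_le hx with h | h
  · subst h
    norm_num
    nlinarith [Real.log_nonneg (by norm_num : (1:ℝ) ≤ 2)]
  · -- A = log(x+2) - log(x+1) ≥ 1/(x+2), B = log(x+1) - log x ≤ 1/x
    have hx1 : (0:ℝ) < x + 1 := by linarith
    have hx2 : (0:ℝ) < x + 2 := by linarith
    have hA : 1 / (x + 2) ≤ Real.log (x + 2) - Real.log (x + 1) := by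
      have := Real.log_le_sub_one_of_pos (x := (x+1)/(x+2)) (by positivity)
      rw [Real.log_div (by linarith) (by linarith)] at this
      have h' : (x + 1) / (x + 2) - 1 = -(1 / (x + 2)) := by field_simp; norm_num
      rw [h'] at this
      linarith
    have hB : Real.log (x + 1) - Real.log x ≤ 1 / x := by
      have := Real.log_le_sub_one_of_pos (x := (x+1)/x) (by positivity)
      rw [Real.log_div (by linarith) (by linarith)] at this
      have h' : (x + 1) / x - 1 = 1 / x := by field_simp; ring
      rw [h'] at this
      linarith
    -- (x+2)A ≥ 1 ≥ x B
    have h1 : 1 ≤ (x + 2) * (Real.log (x + 2) - Real.log (x + 1)) := by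
      have := mul_le_mul_of_nonneg_left hA hx2.le
      rw [mul_one_div, div_self hx2.ne'] at this
      linarith
    have h2 : x * (Real.log (x + 1) - Real.log x) ≤ 1 := by
      have := mul_le_mul_of_nonneg_left hB h.le
      rw [mul_one_div, div_self h.ne'] at this
      linarith
    nlinarith

lemma lamt_mono : Monotone lamt := by
  apply monotone_nat_of_le_succ
  intro k
  have hlog2 : (0:ℝ) < Real.log 2 := Real.log_pos (by norm_num)
  have h := key_log (x := (k : ℝ)) (Nat.cast_nonneg k)
  simp only [lamt, Real.logb]
  push_cast
  simp only [mul_div_assoc']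
  rw [div_sub_div_same, div_sub_div_same, div_le_div_iff_of_pos_right hlog2]
  ring_nf at h ⊢
  linarith


section Rearrange

variable {Z : Type*} {p : Z → ℝ} {q : ℕ → ℝ}

lemma levelFinite (hp : Summable p) {t : ℝ} (ht : 0 < t) : {z | t < p z}.Finite := by
  have h2 : ∀ᶠ z in Filter.cofinite, p z < t :=
    hp.tendsto_cofinite_zero.eventually_lt_const ht
  exact (Filter.eventually_cofinite.mp h2).subset fun z hz => not_lt.2 (le_of_lt hz)

lemma lower_finite_mem {S : Set ℕ} (hfin : S.Finite)
    (hlow : ∀ ⦃i j : ℕ⦄, i ≤ j → j ∈ S → i ∈ S) (i : ℕ) : i ∈ S ↔ i < S.ncard := by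
  constructor
  · intro hi
    have hsub : ↑(Finset.range (i + 1)) ⊆ S := by
      intro j hj
      simp only [Finset.coe_range, Set.mem_Iio] at hj
      exact hlow (Nat.lt_succ_iff.mp hj) hi
    have := Set.ncard_le_ncard hsub hfin
    rw [Set.ncard_coe_finset, Finset.card_range] at this
    omega
  · intro hi
    by_contra hnot
    have hsub : S ⊆ ↑(Finset.range i) := by
      intro j hj
      simp only [Finset.coe_range, Set.mem_Iio]
      by_contra hji
      exact hnot (hlow (not_lt.mp hji) hj)
    have := Set.ncard_le_ncard hsub (Finset.range i).finite_toSet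
    rw [Set.ncard_coe_finset, Finset.card_range] at this
    omega

/-- The matching property derived from `IsDescRearrange`. -/
lemma match_of (hp0 : ∀ z, 0 ≤ p z) (hp1 : HasSum p 1) (h : IsDescRearrange p q) :
    ∀ t : ℝ, 0 < t → ∀ i : ℕ, (t < q i ↔ i < {z | t < p z}.ncard) := by
  intro t ht
  have hlow : ∀ (u : ℝ) ⦃i j : ℕ⦄, i ≤ j → j ∈ {i | u < q i} → i ∈ {i | u < q i} :=
    fun u i j hij hj => lt_of_lt_of_le hj (h.1 hij)
  by_cases hinf : {i | t < q i}.Infinite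
  · exfalso
    have hall : ∀ i, t < q i := by
      intro i
      obtain ⟨j, hj, hij⟩ := hinf.exists_gt i
      exact lt_of_lt_of_le hj (h.1 hij.le)
    have hpz : ∀ z, p z = 0 := by
      intro z
      by_contra hz
      have hpos : 0 < p z := (hp0 z).lt_of_ne (Ne.symm hz)
      set u := min t (p z / 2) with hu
      have hu0 : 0 < u := lt_min ht (by linarith)
      have huz : u < p z := lt_of_le_of_lt (min_le_right _ _) (by linarith)
      have h1 := h.2 u hu0
      have h2 : {i | u < q i} = Set.univ := by
        apply Set.eq_univ_of_forall
        intro i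
        exact lt_of_le_of_lt (min_le_left _ _) (hall i)
      rw [h2] at h1
      have h3 : (Set.univ : Set ℕ).ncard = 0 := Set.Infinite.ncard Set.infinite_univ
      rw [h3] at h1
      have hfin : {z | u < p z}.Finite := levelFinite hp1.summable hu0
      have : z ∈ {z | u < p z} := huz
      have hne : {z | u < p z}.Nonempty := ⟨z, this⟩
      have := (Set.ncard_pos hfin).mpr hne
      omega
    have : p = 0 := funext hpz
    rw [this] at hp1
    have h10 : (1 : ℝ) = 0 := hp1.unique hasSum_zero
    norm_num at h10
  · have hfin : {i | t < q i}.Finite := Set.not_infinite.mp hinf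
    intro i
    rw [h.2 t ht]
    exact lower_finite_mem hfin (hlow t) i

/-- (b): any finite sum of `p` is dominated by the corresponding initial sum of `q`. -/
lemma sum_finset_le (hp1 : HasSum p 1) (hq0 : ∀ i, 0 ≤ q i)
    (hmatch : ∀ t : ℝ, 0 < t → ∀ i : ℕ, (t < q i ↔ i < {z | t < p z}.ncard))
    (S : Finset Z) : ∑ z ∈ S, p z ≤ ∑ i ∈ Finset.range S.card, q i := by
  classical
  suffices h : ∀ n (S : Finset Z), S.card = n → ∑ z ∈ S, p z ≤ ∑ i ∈ Finset.range n, q i by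
    exact h S.card S rfl
  intro n
  induction n with
  | zero =>
    intro S hn
    rw [Finset.card_eq_zero] at hn
    simp [hn]
  | succ n ih =>
    intro S hn
    have hne : S.Nonempty := Finset.card_pos.mp (by omega)
    obtain ⟨z₀, hz₀S, hz₀min⟩ := S.exists_min_image p hne
    have hkey : p z₀ ≤ q n := by
      by_contra hlt
      push_neg at hlt
      have hqn0 : 0 ≤ q n := hq0 n
      set t := (q n + p z₀) / 2 with htdef
      have ht : 0 < t := by simp only [htdef]; linarith
      have htq : q n < t := by simp only [htdef]; linarith
      have htp : t < p z₀ := by simp only [htdef]; linarith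
      have hsub : ↑S ⊆ {z | t < p z} := fun z hz =>
        lt_of_lt_of_le htp (hz₀min z hz)
      have hfinlvl : {z | t < p z}.Finite := levelFinite hp1.summable ht
      have hc := Set.ncard_le_ncard hsub hfinlvl
      rw [Set.ncard_coe_finset, hn] at hc
      have : t < q n := (hmatch t ht n).mpr (by omega)
      linarith
    have herase : (S.erase z₀).card = n := by
      rw [Finset.card_erase_of_mem hz₀S, hn]; omega
    calc ∑ z ∈ S, p z = ∑ z ∈ S.erase z₀, p z + p z₀ := (Finset.sum_erase_add S p hz₀S).symm
      _ ≤ ∑ i ∈ Finset.range n, q i + q n := by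
          have := ih (S.erase z₀) herase
          linarith
      _ = ∑ i ∈ Finset.range (n + 1), q i := (Finset.sum_range_succ q n).symm
    

/-- (c): the initial sums of `q` are nearly dominated by finite sums of `p`. -/
lemma le_sum_finset_add (hps : Summable p)
    (hmatch : ∀ t : ℝ, 0 < t → ∀ i : ℕ, (t < q i ↔ i < {z | t < p z}.ncard))
    (k : ℕ) {ε : ℝ} (hε : 0 < ε) :
    ∃ S : Finset Z, S.card ≤ k ∧ ∑ i ∈ Finset.range k, q i ≤ ∑ z ∈ S, p z + k * ε := by
  classical
  induction k with
  | zero => exact ⟨∅, by simp⟩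
  | succ k ih =>
    obtain ⟨S, hcard, hsum⟩ := ih
    by_cases hqk : q k ≤ ε
    · refine ⟨S, by omega, ?_⟩
      rw [Finset.sum_range_succ]
      push_cast
      linarith
    · push_neg at hqk
      set t := q k - ε with htdef
      have ht : 0 < t := by simp only [htdef]; linarith
      have hklt : k < {z | t < p z}.ncard := (hmatch t ht k).mp (by simp only [htdef]; linarith)
      have hfinlvl : {z | t < p z}.Finite := levelFinite hps ht
      have hncard : {z | t < p z}.ncard = hfinlvl.toFinset.card := by
        rw [← Set.ncard_coe_finset, Set.Finite.coe_toFinset]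
      have hnotsub : ¬ hfinlvl.toFinset ⊆ S := by
        intro hsub
        have := Finset.card_le_card hsub
        omega
      obtain ⟨z, hzlvl, hzS⟩ := Finset.not_subset.mp hnotsub
      have hz : t < p z := by
        rw [Set.Finite.mem_toFinset] at hzlvl
        exact hzlvl
      refine ⟨insert z S, ?_, ?_⟩
      · rw [Finset.card_insert_of_notMem hzS]; omega
      · rw [Finset.sum_insert hzS, Finset.sum_range_succ]
        push_cast
        have : q k ≤ p z + ε := by simp only [htdef] at hz; linarith
        linarith

/-- (d): initial sums of `q` are at most 1. -/
lemma sum_range_le_one (hp0 : ∀ z, 0 ≤ p z) (hp1 : HasSum p 1)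
    (hmatch : ∀ t : ℝ, 0 < t → ∀ i : ℕ, (t < q i ↔ i < {z | t < p z}.ncard))
    (k : ℕ) : ∑ i ∈ Finset.range k, q i ≤ 1 := by
  refine le_of_forall_pos_le_add fun ε hε => ?_
  obtain ⟨S, hcard, hsum⟩ := le_sum_finset_add hp1.summable hmatch k
    (ε := ε / (k + 1)) (by positivity)
  have hS1 : ∑ z ∈ S, p z ≤ 1 := sum_le_hasSum S (fun z _ => hp0 z) hp1
  have hk : (k : ℝ) * (ε / (k + 1)) ≤ ε := by
    rw [mul_div_assoc'] at *
    rw [div_le_iff₀ (by positivity)]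
    nlinarith [Nat.cast_nonneg (α := ℝ) k]
  linarith

/-- (e): `q` sums to 1. -/
lemma hasSum_one (hp0 : ∀ z, 0 ≤ p z) (hp1 : HasSum p 1) (hq0 : ∀ i, 0 ≤ q i)
    (hmatch : ∀ t : ℝ, 0 < t → ∀ i : ℕ, (t < q i ↔ i < {z | t < p z}.ncard)) :
    HasSum q 1 := by
  have hle : ∀ k, ∑ i ∈ Finset.range k, q i ≤ 1 := sum_range_le_one hp0 hp1 hmatch
  have hsum : Summable q := summable_of_sum_range_le hq0 hle
  have h1 : ∑' i, q i ≤ 1 := hsum.tsum_le_of_sum_range_le hle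
  have h2 : (1 : ℝ) ≤ ∑' i, q i := by
    have hS : ∀ S : Finset Z, ∑ z ∈ S, p z ≤ ∑' i, q i := fun S =>
      (sum_finset_le hp1 hq0 hmatch S).trans
        (hsum.sum_le_tsum (Finset.range S.card) (fun i _ => hq0 i))
    calc (1 : ℝ) = ∑' z, p z := hp1.tsum_eq.symm
      _ ≤ ∑' i, q i := hp1.summable.tsum_le_of_sum_le hS
  exact (Summable.hasSum_iff hsum).mpr (le_antisymm h1 h2)

end Rearrange

lemma nonneg_of_summable_mul_lamt {q : ℕ → ℝ} (hqa : Antitone q)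
    (hs : Summable fun i => q i * lamt i) : ∀ i, 0 ≤ q i := by
  by_contra hneg
  push_neg at hneg
  obtain ⟨i0, hi0⟩ := hneg
  have h1 : Tendsto (fun i : ℕ => Real.logb 2 ((i : ℝ) + 1)) atTop atTop :=
    (Real.tendsto_logb_atTop (by norm_num)).comp
      (tendsto_atTop_add_const_right _ 1 tendsto_natCast_atTop_atTop)
  have hbot : Tendsto (fun i : ℕ => q i0 * Real.logb 2 ((i : ℝ) + 1)) atTop atBot :=
    Filter.Tendsto.const_mul_atTop_of_neg hi0 h1
  have hle : ∀ᶠ i in atTop, q i * lamt i ≤ q i0 * Real.logb 2 ((i : ℝ) + 1) := by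
    filter_upwards [eventually_ge_atTop i0] with i hi
    have h2 : q i * lamt i ≤ q i0 * lamt i := mul_le_mul_of_nonneg_right (hqa hi) (lamt_nonneg i)
    have h3 : q i0 * lamt i ≤ q i0 * Real.logb 2 ((i : ℝ) + 1) :=
      mul_le_mul_of_nonpos_left (logb_le_lamt i) hi0.le
    linarith
  have hbot2 : Tendsto (fun i : ℕ => q i * lamt i) atTop atBot :=
    tendsto_atBot_mono' atTop hle hbot
  exact not_tendsto_atBot_of_tendsto_nhds hs.tendsto_atTop_zero hbot2

lemma cheb {c : ℕ → ℝ} (hc : Antitone c) (a r M : ℕ) (hrM : r ≤ M) :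
    (r : ℝ) * ∑ i ∈ Finset.Ico a (a + M), c i
      ≤ (M : ℝ) * ∑ i ∈ Finset.Ico a (a + r), c i := by
  have hsplit : ∑ i ∈ Finset.Ico a (a + M), c i
      = ∑ i ∈ Finset.Ico a (a + r), c i + ∑ i ∈ Finset.Ico (a + r) (a + M), c i :=
    (Finset.sum_Ico_consecutive _ (by omega) (by omega)).symm
  have h1 : (r : ℝ) * c (a + r) ≤ ∑ i ∈ Finset.Ico a (a + r), c i := by
    have := Finset.card_nsmul_le_sum (Finset.Ico a (a + r)) c (c (a + r))
      (fun i hi => hc (by simp only [Finset.mem_Ico] at hi; omega))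
    simpa [Nat.card_Ico, nsmul_eq_mul] using this
  have h2 : ∑ i ∈ Finset.Ico (a + r) (a + M), c i ≤ ((M : ℝ) - r) * c (a + r) := by
    have := Finset.sum_le_card_nsmul (Finset.Ico (a + r) (a + M)) c (c (a + r))
      (fun i hi => hc (by simp only [Finset.mem_Ico] at hi; omega))
    have hcard : ((Finset.Ico (a + r) (a + M)).card : ℝ) = (M : ℝ) - r := by
      rw [Nat.card_Ico]
      have : a + M - (a + r) = M - r := by omega
      rw [this, Nat.cast_sub hrM]
    rw [nsmul_eq_mul, hcard] at this
    exact this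
  have hr0 : (0 : ℝ) ≤ (M : ℝ) - r := by
    have : (r : ℝ) ≤ M := by exact_mod_cast hrM
    linarith
  nlinarith [mul_le_mul_of_nonneg_left h1 hr0,
    mul_le_mul_of_nonneg_left h2 (Nat.cast_nonneg (α := ℝ) r)]

lemma key_finite (a s : ℕ → ℝ)
    (ha1 : ∀ k, ∑ i ∈ Finset.range k, a i ≤ 1)
    (haS : ∀ k, ∑ i ∈ Finset.range k, s i ≤ ∑ i ∈ Finset.range k, a i)
    (hs0 : ∀ i, 0 ≤ s i)
    {n N : ℕ} (hnN : n ≤ N) :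
    ∑ i ∈ Finset.range n, a i * lamt i
      ≤ (1 - ∑ i ∈ Finset.range N, s i) * lamt n
        + ∑ i ∈ Finset.range N, s i * lamt i := by
  set d : ℕ → ℝ := fun k => lamt (k + 1) - lamt k with hd
  have hd0 : ∀ k, 0 ≤ d k := fun k => sub_nonneg.2 (lamt_mono (Nat.le_succ k))
  have hdsum : ∀ j, ∑ k ∈ Finset.range j, d k = lamt j := by
    intro j
    rw [hd]
    rw [Finset.sum_range_sub lamt j, lamt_zero, sub_zero]
  have hfilt2 : ∀ (k M : ℕ), (Finset.range M).filter (fun i => k < i) = Finset.Ico (k + 1) M := by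
    intro k M; ext i
    simp only [Finset.mem_filter, Finset.mem_range, Finset.mem_Ico]; omega
  have hfilt4 : ∀ i : ℕ, (Finset.range n).filter (fun k => k < i) = Finset.range (min n i) := by
    intro i; ext k
    simp only [Finset.mem_filter, Finset.mem_range]
    omega
  have stepA : ∑ i ∈ Finset.range n, a i * lamt i
      = ∑ k ∈ Finset.range n, ∑ i ∈ Finset.range n, if k < i then a i * d k else 0 := by
    rw [Finset.sum_comm]
    refine Finset.sum_congr rfl fun i hi => ?_
    have hin : i < n := Finset.mem_range.mp hi
    calc a i * lamt i = ∑ k ∈ Finset.range i, a i * d k := by rw [← Finset.mul_sum, hdsum]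
      _ = ∑ k ∈ (Finset.range n).filter (fun k => k < i), a i * d k := by
          rw [hfilt4 i, min_eq_right hin.le]
      _ = ∑ k ∈ Finset.range n, if k < i then a i * d k else 0 := Finset.sum_filter _ _
  have stepC : ∀ k, ∑ i ∈ Finset.range n, (if k < i then a i * d k else 0)
      = d k * ∑ i ∈ Finset.Ico (k + 1) n, a i := by
    intro k
    rw [← Finset.sum_filter, hfilt2 k n, Finset.mul_sum]
    exact Finset.sum_congr rfl fun i _ => mul_comm _ _
  have stepD : ∀ k ∈ Finset.range n,
      d k * ∑ i ∈ Finset.Ico (k + 1) n, a i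
        ≤ d k * ((1 - ∑ i ∈ Finset.range N, s i) + ∑ i ∈ Finset.Ico (k + 1) N, s i) := by
    intro k hk
    have hkn : k + 1 ≤ n := Finset.mem_range.mp hk
    refine mul_le_mul_of_nonneg_left ?_ (hd0 k)
    have e1 : ∑ i ∈ Finset.Ico (k + 1) n, a i
        = ∑ i ∈ Finset.range n, a i - ∑ i ∈ Finset.range (k + 1), a i := by
      rw [Finset.sum_Ico_eq_sub _ hkn]
    have e2 : ∑ i ∈ Finset.Ico (k + 1) N, s i
        = ∑ i ∈ Finset.range N, s i - ∑ i ∈ Finset.range (k + 1), s i := by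
      rw [Finset.sum_Ico_eq_sub _ (hkn.trans hnN)]
    have h1 := ha1 n
    have h2 := haS (k + 1)
    rw [e1, e2]
    linarith
  have stepF : ∑ k ∈ Finset.range n, d k * ∑ i ∈ Finset.Ico (k + 1) N, s i
      ≤ ∑ i ∈ Finset.range N, s i * lamt i := by
    have e : ∑ k ∈ Finset.range n, d k * ∑ i ∈ Finset.Ico (k + 1) N, s i
        = ∑ i ∈ Finset.range N, s i * lamt (min n i) := by
      have e1 : ∀ k, d k * ∑ i ∈ Finset.Ico (k + 1) N, s i
          = ∑ i ∈ Finset.range N, if k < i then d k * s i else 0 := by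
        intro k
        rw [← Finset.sum_filter, hfilt2 k N, Finset.mul_sum]
      simp only [e1]
      rw [Finset.sum_comm]
      refine Finset.sum_congr rfl fun i _ => ?_
      calc ∑ k ∈ Finset.range n, (if k < i then d k * s i else 0)
          = ∑ k ∈ (Finset.range n).filter (fun k => k < i), d k * s i :=
            (Finset.sum_filter _ _).symm
        _ = (∑ k ∈ Finset.range (min n i), d k) * s i := by
            rw [hfilt4 i, Finset.sum_mul]
        _ = s i * lamt (min n i) := by rw [hdsum, mul_comm]
    rw [e]
    refine Finset.sum_le_sum fun i _ => ?_
    exact mul_le_mul_of_nonneg_left (lamt_mono (min_le_right n i)) (hs0 i)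
  calc ∑ i ∈ Finset.range n, a i * lamt i
      = ∑ k ∈ Finset.range n, d k * ∑ i ∈ Finset.Ico (k + 1) n, a i := by
        rw [stepA]
        exact Finset.sum_congr rfl fun k _ => stepC k
    _ ≤ ∑ k ∈ Finset.range n, d k * ((1 - ∑ i ∈ Finset.range N, s i) + ∑ i ∈ Finset.Ico (k + 1) N, s i) :=
        Finset.sum_le_sum stepD
    _ = (1 - ∑ i ∈ Finset.range N, s i) * lamt n
        + ∑ k ∈ Finset.range n, d k * ∑ i ∈ Finset.Ico (k + 1) N, s i := by
        simp only [mul_add, Finset.sum_add_distrib]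
        rw [← Finset.sum_mul, hdsum]
        ring
    _ ≤ (1 - ∑ i ∈ Finset.range N, s i) * lamt n + ∑ i ∈ Finset.range N, s i * lamt i := by
        linarith [stepF]

section Blocks

variable {m : ℕ} (hm : 0 < m) (q : ℕ → ℝ)

lemma div_eq_block {j i : ℕ} (h1 : m * j ≤ i) (h2 : i < m * j + m) : i / m = j := by
  have h1' : j * m ≤ i := by rwa [Nat.mul_comm] at h1
  have h2' : i < (j + 1) * m := by
    rw [Nat.add_mul, Nat.one_mul]
    rw [Nat.mul_comm m j] at h2
    omega
  exact Nat.div_eq_of_lt_le h1' h2'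

lemma range_split (a b : ℕ) (f : ℕ → ℝ) (h : a ≤ b) :
    ∑ i ∈ Finset.range b, f i = ∑ i ∈ Finset.range a, f i + ∑ i ∈ Finset.Ico a b, f i := by
  simp only [Finset.range_eq_Ico]
  exact (Finset.sum_Ico_consecutive f (Nat.zero_le a) h).symm

include hm

lemma sum_s_mul (K : ℕ) :
    ∑ i ∈ Finset.range (m * K), q (i / m) / m = ∑ j ∈ Finset.range K, q j := by
  induction K with
  | zero => simp
  | succ K ih =>
    have hsplit := range_split (m * K) (m * (K + 1)) (fun i => q (i / m) / m)
      (Nat.mul_le_mul_left m (Nat.le_succ K))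
    rw [hsplit, ih, Finset.sum_range_succ]
    congr 1
    have hconst : ∀ i ∈ Finset.Ico (m * K) (m * (K + 1)), q (i / m) / m = q K / m := by
      intro i hi
      rw [Finset.mem_Ico] at hi
      rw [div_eq_block hi.1 (by have := hi.2; rw [Nat.mul_succ] at this; omega)]
    rw [Finset.sum_congr rfl hconst, Finset.sum_const, Nat.card_Ico]
    have : m * (K + 1) - m * K = m := by rw [Nat.mul_succ]; omega
    rw [this, nsmul_eq_mul]
    field_simp

lemma sum_s_general (k : ℕ) :
    ∑ i ∈ Finset.range k, q (i / m) / m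
      = ∑ j ∈ Finset.range (k / m), q j + ((k % m : ℕ) : ℝ) / m * q (k / m) := by
  have hk : m * (k / m) + k % m = k := Nat.div_add_mod k m
  have hle : m * (k / m) ≤ k := by omega
  rw [range_split (m * (k / m)) k _ hle, sum_s_mul hm q (k / m)]
  congr 1
  have hconst : ∀ i ∈ Finset.Ico (m * (k / m)) k, q (i / m) / m = q (k / m) / m := by
    intro i hi
    rw [Finset.mem_Ico] at hi
    rw [div_eq_block hi.1 (by have := Nat.mod_lt k hm; omega)]
    
  rw [Finset.sum_congr rfl hconst, Finset.sum_const, Nat.card_Ico, nsmul_eq_mul]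
  have : k - m * (k / m) = k % m := by omega
  rw [this]
  ring

lemma g_mul (K : ℕ) : g (m * K) = (m : ℝ) * K * Real.logb 2 m + (m : ℝ) * g K := by
  rcases Nat.eq_zero_or_pos K with h | h
  · subst h; simp [g]
  · have hm' : ((m : ℝ)) ≠ 0 := by positivity
    have hK' : ((K : ℝ)) ≠ 0 := by positivity
    simp only [g]
    push_cast
    rw [Real.logb_mul hm' hK']
    ring

lemma g_block (K : ℕ) : g (m * (K + 1)) - g (m * K) = (m : ℝ) * (lamt K + Real.logb 2 m) := by
  rw [g_mul hm (K + 1), g_mul hm K, lamt_eq_g]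
  push_cast
  ring

lemma sum_s_lamt (K : ℕ) :
    ∑ i ∈ Finset.range (m * K), q (i / m) / m * lamt i
      = ∑ j ∈ Finset.range K, (q j * lamt j + q j * Real.logb 2 m) := by
  induction K with
  | zero => simp
  | succ K ih =>
    rw [range_split (m * K) (m * (K + 1)) _ (Nat.mul_le_mul_left m (Nat.le_succ K)), ih,
      Finset.sum_range_succ]
    congr 1
    have hconst : ∀ i ∈ Finset.Ico (m * K) (m * (K + 1)), q (i / m) / m * lamt i
        = q K / m * lamt i := by
      intro i hi
      rw [Finset.mem_Ico] at hi
      rw [div_eq_block hi.1 (by have := hi.2; rw [Nat.mul_succ] at this; omega)]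
    rw [Finset.sum_congr rfl hconst, ← Finset.mul_sum]
    have hlamt : ∑ i ∈ Finset.Ico (m * K) (m * (K + 1)), lamt i = g (m * (K + 1)) - g (m * K) := by
      rw [Finset.sum_Ico_eq_sub _ (Nat.mul_le_mul_left m (Nat.le_succ K)), sum_range_lamt,
        sum_range_lamt]
    rw [hlamt, g_block hm K]
    have hm' : ((m : ℝ)) ≠ 0 := by positivity
    field_simp

end Blocks

end Stmt9


/-- bounded increase: for a joint pmf on `X × Y` with `Y` finite,
`Λ(X,Y) ≤ Λ(X) + log₂ |𝒴|`. -/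
theorem stmt9 {X Y : Type*} [Fintype Y] [Nonempty Y]
    (p : X × Y → ℝ) (hp : IsPMF p)
    (qXY qX : ℕ → ℝ)
    (hqXY : IsDescRearrange p qXY)
    (hqX : IsDescRearrange (fun x : X => ∑ y : Y, p (x, y)) qX)
    (hsX : Summable (fun i => qX i * lamt i)) :
    ∑' i : ℕ, qXY i * lamt i
      ≤ (∑' i : ℕ, qX i * lamt i) + Real.logb 2 (Fintype.card Y) := by
  classical
  obtain ⟨hp0, hp1⟩ := hp
  have hm : 0 < Fintype.card Y := Fintype.card_pos
  set m := Fintype.card Y with hmdef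
  set pX : X → ℝ := fun x => ∑ y : Y, p (x, y) with hpXdef
  have hpX0 : ∀ x, 0 ≤ pX x := fun x => Finset.sum_nonneg fun y _ => hp0 _
  have hpX1 : HasSum pX 1 := HasSum.prod_fiberwise hp1 fun x => hasSum_fintype _
  have hmatchXY := Stmt9.match_of hp0 hp1 hqXY
  have hmatchX := Stmt9.match_of hpX0 hpX1 hqX
  have hqX0 : ∀ i, 0 ≤ qX i := Stmt9.nonneg_of_summable_mul_lamt hqX.1 hsX
  have hlogm0 : (0 : ℝ) ≤ Real.logb 2 (m : ℝ) :=
    Real.logb_nonneg (by norm_num) (by exact_mod_cast hm)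
  by_cases hnn : ∀ i, 0 ≤ qXY i
  case neg =>
    push_neg at hnn
    obtain ⟨i0, hi0⟩ := hnn
    have hns : ¬ Summable (fun i => qXY i * lamt i) := fun hs =>
      absurd (Stmt9.nonneg_of_summable_mul_lamt hqXY.1 hs i0) (not_le.2 hi0)
    rw [tsum_eq_zero_of_not_summable hns]
    have h0 : 0 ≤ ∑' i, qX i * lamt i :=
      tsum_nonneg fun i => mul_nonneg (hqX0 i) (Stmt9.lamt_nonneg i)
    linarith
  case pos =>
  have hqX1 : HasSum qX 1 := Stmt9.hasSum_one hpX0 hpX1 hqX0 hmatchX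
  have hs0 : ∀ i : ℕ, 0 ≤ qX (i / m) / m := fun i => div_nonneg (hqX0 _) (by positivity)
  have hA1 : ∀ k, ∑ i ∈ Finset.range k, qXY i ≤ 1 :=
    Stmt9.sum_range_le_one hp0 hp1 hmatchXY
  -- Q j ≤ A (m*j)
  have hQA : ∀ j, ∑ l ∈ Finset.range j, qX l ≤ ∑ i ∈ Finset.range (m * j), qXY i := by
    intro j
    refine le_of_forall_pos_le_add fun ε hε => ?_
    obtain ⟨T, hTcard, hTsum⟩ := Stmt9.le_sum_finset_add hpX1.summable hmatchX j
      (ε := ε / (j + 1)) (by positivity)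
    have hprod : ∑ x ∈ T, pX x = ∑ z ∈ T ×ˢ (Finset.univ : Finset Y), p z := by
      rw [Finset.sum_product]
    have hcard : (T ×ˢ (Finset.univ : Finset Y)).card = T.card * m := by
      rw [Finset.card_product, Finset.card_univ]
    have hb := Stmt9.sum_finset_le hp1 hnn hmatchXY (T ×ˢ (Finset.univ : Finset Y))
    rw [hcard] at hb
    have hmono : ∑ i ∈ Finset.range (T.card * m), qXY i
        ≤ ∑ i ∈ Finset.range (m * j), qXY i :=
      Finset.sum_le_sum_of_subset_of_nonneg
        (Finset.range_subset_range.mpr (by rw [Nat.mul_comm]; exact Nat.mul_le_mul_left m hTcard))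
        (fun i _ _ => hnn i)
    have hεj : (j : ℝ) * (ε / (j + 1)) ≤ ε := by
      rw [mul_div_assoc']
      rw [div_le_iff₀ (by positivity)]
      nlinarith [Nat.cast_nonneg (α := ℝ) j]
    calc ∑ l ∈ Finset.range j, qX l ≤ ∑ x ∈ T, pX x + j * (ε / (j + 1)) := hTsum
      _ ≤ ∑ i ∈ Finset.range (m * j), qXY i + ε := by
          rw [hprod]
          linarith
  -- S k ≤ A k
  have hSA : ∀ k, ∑ i ∈ Finset.range k, qX (i / m) / m ≤ ∑ i ∈ Finset.range k, qXY i := by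
    intro k
    have hrm : k % m < m := Nat.mod_lt _ hm
    have hk : m * (k / m) + k % m = k := Nat.div_add_mod k m
    rw [Stmt9.sum_s_general hm qX k]
    have h1 := hQA (k / m)
    have h2 := hQA (k / m + 1)
    rw [Finset.sum_range_succ] at h2
    have hcheb := Stmt9.cheb hqXY.1 (m * (k / m)) (k % m) m hrm.le
    have e1 : ∑ i ∈ Finset.Ico (m * (k / m)) (m * (k / m) + m), qXY i
        = ∑ i ∈ Finset.range (m * (k / m + 1)), qXY i
          - ∑ i ∈ Finset.range (m * (k / m)), qXY i := by
      rw [show m * (k / m) + m = m * (k / m + 1) by rw [Nat.mul_succ],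
        Finset.sum_Ico_eq_sub _ (Nat.mul_le_mul_left m (Nat.le_succ _))]
    have e2 : ∑ i ∈ Finset.Ico (m * (k / m)) (m * (k / m) + k % m), qXY i
        = ∑ i ∈ Finset.range k, qXY i - ∑ i ∈ Finset.range (m * (k / m)), qXY i := by
      rw [show m * (k / m) + k % m = k from hk, Finset.sum_Ico_eq_sub _ (by omega)]
    rw [e1, e2] at hcheb
    have hmR : (0 : ℝ) < (m : ℝ) := by exact_mod_cast hm
    have hrR : (0 : ℝ) ≤ ((k % m : ℕ) : ℝ) := Nat.cast_nonneg _
    have hrmR : ((k % m : ℕ) : ℝ) ≤ (m : ℝ) := by exact_mod_cast hrm.le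
    have e3 : (m : ℝ) * (∑ j ∈ Finset.range (k / m), qX j
        + ((k % m : ℕ) : ℝ) / m * qX (k / m))
        = (m : ℝ) * ∑ j ∈ Finset.range (k / m), qX j
          + ((k % m : ℕ) : ℝ) * qX (k / m) := by
      field_simp
    refine le_of_mul_le_mul_left ?_ hmR
    rw [e3]
    nlinarith [mul_le_mul_of_nonneg_left h1 (by linarith : (0:ℝ) ≤ (m : ℝ) - ((k % m : ℕ) : ℝ)),
      mul_le_mul_of_nonneg_left h2 hrR, mul_nonneg hrR (hqX0 (k / m))]
  -- the finite key inequality, in block form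
  have hkeyN : ∀ n K : ℕ, n ≤ m * K →
      ∑ i ∈ Finset.range n, qXY i * lamt i
        ≤ (1 - ∑ l ∈ Finset.range K, qX l) * lamt n
          + ∑ j ∈ Finset.range K, (qX j * lamt j + qX j * Real.logb 2 (m : ℝ)) := by
    intro n K hnK
    have h := Stmt9.key_finite qXY (fun i => qX (i / m) / m) hA1 hSA hs0 (N := m * K) hnK
    rwa [Stmt9.sum_s_mul hm qX K, Stmt9.sum_s_lamt hm qX K] at h
  -- limits
  have hn_bound : ∀ n, ∑ i ∈ Finset.range n, qXY i * lamt i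
      ≤ (∑' i, qX i * lamt i) + Real.logb 2 (m : ℝ) := by
    intro n
    have hTend : Filter.Tendsto
        (fun K => (1 - ∑ l ∈ Finset.range K, qX l) * lamt n
          + ∑ j ∈ Finset.range K, (qX j * lamt j + qX j * Real.logb 2 (m : ℝ)))
        Filter.atTop
        (nhds ((1 - 1) * lamt n
          + ((∑' i, qX i * lamt i) + 1 * Real.logb 2 (m : ℝ)))) := by
      apply Filter.Tendsto.add
      · exact (tendsto_const_nhds.sub hqX1.tendsto_sum_nat).mul tendsto_const_nhds
      · exact (hsX.hasSum.add (hqX1.mul_right (Real.logb 2 (m : ℝ)))).tendsto_sum_nat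
    have hval : (1 - 1 : ℝ) * lamt n
        + ((∑' i, qX i * lamt i) + 1 * Real.logb 2 (m : ℝ))
        = (∑' i, qX i * lamt i) + Real.logb 2 (m : ℝ) := by ring
    rw [hval] at hTend
    refine ge_of_tendsto hTend ?_
    filter_upwards [Filter.eventually_ge_atTop n] with K hK
    exact hkeyN n K (hK.trans (Nat.le_mul_of_pos_left K hm))
  have hsummable : Summable (fun i => qXY i * lamt i) :=
    summable_of_sum_range_le (fun i => mul_nonneg (hnn i) (Stmt9.lamt_nonneg i)) hn_bound
  exact hsummable.tsum_le_of_sum_range_le hn_bound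
end
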